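/- arXiv:math/0401324 — 2 statements merged into one kernel-verified Lean document; each statement's English description precedes it below -/
import Mathlib

section
/- If w is the concatenation of normal forms of reflections t_1,…,t_n in W_n whose product is c = s_1⋯s_n, and some execution of the cancellation procedure reducing w to (s_1,…,s_n) never cancels any of the n content (middle) letters, then all normal forms are single letters and (t_1,…,t_n) = (s_1,…,s_n). -/
/-- The elementary Hurwitz move `σ_i` on `n`-tuples of a group `G`
(0-indexed: acts on entries `i` and `i+1`). -/
def hmove (n : ℕ) (G : Type*) [Group G] (i : ℕ) (hi : i + 1 < n)
    (g : Fin n → G) : Fin n → G := fun j =>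
  if (j : ℕ) = i then g ⟨i, by omega⟩ * g ⟨i + 1, hi⟩ * (g ⟨i, by omega⟩)⁻¹
  else if (j : ℕ) = i + 1 then g ⟨i, by omega⟩
  else g j

/-- One elementary step of the Hurwitz action. -/
def hstep (n : ℕ) (G : Type*) [Group G] (a b : Fin n → G) : Prop :=
  ∃ (i : ℕ) (hi : i + 1 < n), b = hmove n G i hi a

/-- Braid relations: generators `σ_1, …, σ_{n-1}` indexed by `Fin (n-1)`. -/
def braidRels (n : ℕ) : Set (FreeGroup (Fin (n - 1))) :=
  { r | (∃ i j : Fin (n - 1), (i : ℕ) + 1 = (j : ℕ) ∧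
          r = FreeGroup.of i * FreeGroup.of j * FreeGroup.of i *
            (FreeGroup.of j * FreeGroup.of i * FreeGroup.of j)⁻¹) ∨
        (∃ i j : Fin (n - 1), (i : ℕ) + 1 < (j : ℕ) ∧
          r = FreeGroup.of i * FreeGroup.of j * (FreeGroup.of j * FreeGroup.of i)⁻¹) }

/-- The braid group `B_n`. -/
abbrev BraidGroup (n : ℕ) := PresentedGroup (braidRels n)

/-- Relations of the universal Coxeter group: each generator squares to 1. -/
def coxRels (n : ℕ) : Set (FreeGroup (Fin n)) :=
  { r | ∃ i, r = FreeGroup.of i * FreeGroup.of i }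

/-- The universal Coxeter group `W_n`. -/
abbrev UCox (n : ℕ) := PresentedGroup (coxRels n)

/-- The generator `s_i` of `W_n`. -/
def sgen {n : ℕ} (i : Fin n) : UCox n := PresentedGroup.of i

/-- The Coxeter element `c = s_1 ⋯ s_n`. -/
def coxElt (n : ℕ) : UCox n := (List.ofFn fun i => sgen i).prod

/-- The set `T` of reflections of `W_n`: conjugates of generators. -/
def Refl (n : ℕ) : Set (UCox n) := { t | ∃ w i, t = w * sgen i * w⁻¹ }

/-- `Red_T(c)`: `n`-tuples of reflections with product `c`. -/
def RedT (n : ℕ) : Set (Fin n → UCox n) :=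
  { t | (∀ i, t i ∈ Refl n) ∧ (List.ofFn t).prod = coxElt n }

/-- The set `R` of braid reflections of the free group: conjugates of generators. -/
def Rset (n : ℕ) : Set (FreeGroup (Fin n)) :=
  { r | ∃ w i, r = w * FreeGroup.of i * w⁻¹ }

/-- `g = f_1 ⋯ f_n`. -/
def gElt (n : ℕ) : FreeGroup (Fin n) := (List.ofFn fun i => FreeGroup.of i).prod

/-- `Red_R(g)`: `n`-tuples from `R` with product `g`. -/
def RedR (n : ℕ) : Set (Fin n → FreeGroup (Fin n)) :=
  { t | (∀ i, t i ∈ Rset n) ∧ (List.ofFn t).prod = gElt n }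

/-- The canonical projection `π : F_n → W_n`, `f_i ↦ s_i`. -/
def pr (n : ℕ) : FreeGroup (Fin n) →* UCox n := FreeGroup.lift fun i => sgen i

/-- Length of an element of `W_n`: the length of its normal form. -/
noncomputable def wordLength {n : ℕ} (w : UCox n) : ℕ :=
  sInf { m | ∃ l : List (Fin n),
    List.Chain' (· ≠ ·) l ∧ l.length = m ∧ (l.map sgen).prod = w }

/-- Cancellation step on marked words: delete an adjacent equal pair of unmarked letters. -/
def mstep (n : ℕ) (a b : List (Fin n × Bool)) : Prop :=
  ∃ (x y : List (Fin n × Bool)) (c : Fin n),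
    a = x ++ (c, false) :: (c, false) :: y ∧ b = x ++ y

/-- The marked normal form of a reflection `u_1 ⋯ u_k s u_k ⋯ u_1`,
with the content letter `s` marked. -/
def mword {n : ℕ} (u : List (Fin n)) (j : Fin n) : List (Fin n × Bool) :=
  u.map (·, false) ++ (j, true) :: u.reverse.map (·, false)

/-!
`W_n` acts on its reduced words (no two equal adjacent letters): `s_i` cancels a leading `i` or
prepends one. Evaluating at the empty word shows that reduced words are unique normal forms.

A cancellation step removes two equal unmarked letters, so it preserves the product of the word,
the sequence of content letters, and the product of every maximal unmarked segment. The final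
word is reduced with product `c`, so it spells `s_1 ⋯ s_n`; having only `n` letters and still
containing the `n` content letters, it consists of them alone. Hence `j i = i` and all segment
products are trivial. In the initial word these segments are `u_1`, `u_1⁻¹ u_2`, …, `u_n⁻¹`, so,
read from left to right, uniqueness of reduced words gives `u_1 = ⋯ = u_n = []`.
-/

open List

section

variable {n : ℕ}

theorem sgen_mul_self (i : Fin n) : sgen i * sgen i = 1 := by
  simpa only [sgen, PresentedGroup.of, map_mul] using
    PresentedGroup.one_of_mem (show FreeGroup.of i * FreeGroup.of i ∈ coxRels n from ⟨i, rfl⟩)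

/-- The reduced word of `s_i * w`, for `w` reduced. -/
def leftMulLetter (i : Fin n) : List (Fin n) → List (Fin n)
  | [] => [i]
  | a :: t => if a = i then t else i :: a :: t

theorem isChain_leftMulLetter (i : Fin n) {l : List (Fin n)} (h : l.IsChain (· ≠ ·)) :
    (leftMulLetter i l).IsChain (· ≠ ·) := by
  cases l with
  | nil => exact isChain_singleton i
  | cons a t =>
    by_cases ha : a = i
    · rw [leftMulLetter, if_pos ha]
      exact h.tail
    · rw [leftMulLetter, if_neg ha]
      exact isChain_cons_cons.2 ⟨Ne.symm ha, h⟩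

theorem leftMulLetter_cons_of_isChain {a : Fin n} {t : List (Fin n)}
    (h : (a :: t).IsChain (· ≠ ·)) : leftMulLetter a t = a :: t := by
  cases t with
  | nil => rfl
  | cons b t => simp [leftMulLetter, Ne.symm (isChain_cons_cons.1 h).1]

theorem leftMulLetter_leftMulLetter (i : Fin n) {l : List (Fin n)} (h : l.IsChain (· ≠ ·)) :
    leftMulLetter i (leftMulLetter i l) = l := by
  cases l with
  | nil => simp [leftMulLetter]
  | cons a t =>
    by_cases ha : a = i
    · subst ha
      simpa only [leftMulLetter, if_pos] using leftMulLetter_cons_of_isChain h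
    · simp [leftMulLetter, ha]

def reducedWordAction : UCox n →* Equiv.Perm {l : List (Fin n) // l.IsChain (· ≠ ·)} :=
  PresentedGroup.toGroup
    (f := fun i => Function.Involutive.toPerm
      (fun l => ⟨leftMulLetter i l.1, isChain_leftMulLetter i l.2⟩)
      (fun l => Subtype.ext (leftMulLetter_leftMulLetter i l.2)))
    (by
      rintro _ ⟨i, rfl⟩
      ext l : 1
      exact Subtype.ext (leftMulLetter_leftMulLetter i l.2))

theorem reducedWordAction_prod_nil {l : List (Fin n)} (h : l.IsChain (· ≠ ·)) :
    reducedWordAction (l.map sgen).prod ⟨[], isChain_nil⟩ = ⟨l, h⟩ := by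
  induction l with
  | nil => rfl
  | cons a t ih =>
    rw [map_cons, prod_cons, map_mul, Equiv.Perm.mul_apply, ih h.tail]
    exact Subtype.ext (leftMulLetter_cons_of_isChain h)

theorem eq_of_isChain_of_prod_map_sgen_eq {l₁ l₂ : List (Fin n)} (h₁ : l₁.IsChain (· ≠ ·))
    (h₂ : l₂.IsChain (· ≠ ·)) (h : (l₁.map sgen).prod = (l₂.map sgen).prod) : l₁ = l₂ := by
  have h₁₂ := reducedWordAction_prod_nil h₁
  rw [h, reducedWordAction_prod_nil h₂] at h₁₂
  exact congrArg Subtype.val h₁₂.symm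

theorem eq_nil_of_isChain_of_prod_map_sgen_eq_one {l : List (Fin n)} (h : l.IsChain (· ≠ ·))
    (hl : (l.map sgen).prod = 1) : l = [] :=
  eq_of_isChain_of_prod_map_sgen_eq h isChain_nil (by simpa using hl)

def markedWordProd (w : List (Fin n × Bool)) : UCox n := (w.map (sgen ·.1)).prod

/-- The products in `W_n` of the maximal runs of unmarked letters, from left to right. -/
def segmentProds : List (Fin n × Bool) → List (UCox n)
  | [] => [1]
  | (_, true) :: w => 1 :: segmentProds w
  | (c, false) :: w => (sgen c * (segmentProds w).headI) :: (segmentProds w).tail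

theorem headI_cons_tail_segmentProds (w : List (Fin n × Bool)) :
    (segmentProds w).headI :: (segmentProds w).tail = segmentProds w := by
  rcases w with _ | ⟨⟨_, _ | _⟩, _⟩ <;> rfl

theorem segmentProds_unmarked_append (v : List (Fin n)) (w : List (Fin n × Bool)) :
    segmentProds (v.map (·, false) ++ w) =
      ((v.map sgen).prod * (segmentProds w).headI) :: (segmentProds w).tail := by
  induction v with
  | nil => simpa using (headI_cons_tail_segmentProds w).symm
  | cons a v ih => simp [segmentProds, ih, mul_assoc]

theorem segmentProds_map_marked (l : List (Fin n)) :
    segmentProds (l.map (·, true)) = replicate (l.length + 1) 1 := by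
  induction l with
  | nil => rfl
  | cons a l ih => simp [segmentProds, ih, replicate_succ]

theorem segmentProds_cancel (x y : List (Fin n × Bool)) (c : Fin n) :
    segmentProds (x ++ (c, false) :: (c, false) :: y) = segmentProds (x ++ y) := by
  induction x with
  | nil =>
    simpa [segmentProds, ← mul_assoc, sgen_mul_self] using headI_cons_tail_segmentProds y
  | cons p x ih =>
    obtain ⟨a, _ | _⟩ := p <;> simp [segmentProds, ih]

theorem markedWordProd_eq_of_mstep {a b : List (Fin n × Bool)} (h : mstep n a b) :
    markedWordProd a = markedWordProd b := by
  obtain ⟨x, y, c, rfl, rfl⟩ := h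
  simp [markedWordProd, ← mul_assoc, sgen_mul_self]

theorem filter_snd_eq_of_mstep {a b : List (Fin n × Bool)} (h : mstep n a b) :
    a.filter (·.2) = b.filter (·.2) := by
  obtain ⟨x, y, c, rfl, rfl⟩ := h
  simp

theorem segmentProds_eq_of_mstep {a b : List (Fin n × Bool)} (h : mstep n a b) :
    segmentProds a = segmentProds b := by
  obtain ⟨x, y, c, rfl, rfl⟩ := h
  exact segmentProds_cancel x y c

theorem eq_of_reflTransGen_mstep {β : Type*} (f : List (Fin n × Bool) → β)
    (hf : ∀ {a b}, mstep n a b → f a = f b) {a b : List (Fin n × Bool)}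
    (h : Relation.ReflTransGen (mstep n) a b) : f a = f b := by
  induction h with
  | refl => rfl
  | tail _ hbc ih => exact ih.trans (hf hbc)

theorem markedWordProd_flatten (ws : List (List (Fin n × Bool))) :
    markedWordProd ws.flatten = (ws.map markedWordProd).prod := by
  rw [markedWordProd, map_flatten, prod_flatten, map_map]
  rfl

theorem markedWordProd_mword (v : List (Fin n)) (k : Fin n) :
    markedWordProd (mword v k) = ((v ++ k :: v.reverse).map sgen).prod := by
  simp [markedWordProd, mword, Function.comp_def]

theorem filter_snd_flatten_ofFn_mword {m : ℕ} (u : Fin m → List (Fin n)) (j : Fin m → Fin n) :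
    (ofFn fun i => mword (u i) (j i)).flatten.filter (·.2) = ofFn fun i => (j i, true) := by
  simpa [mword, filter_flatten, filter_map, map_ofFn, Function.comp_def, flatMap_def] using
    flatMap_singleton' (ofFn fun i => (j i, true))

theorem eq_nil_of_segmentProds_flatten_ofFn_mword {m : ℕ} {u : Fin m → List (Fin n)}
    {j : Fin m → Fin n} (hu : ∀ i, (u i).IsChain (· ≠ ·))
    (h : segmentProds (ofFn fun i => mword (u i) (j i)).flatten = replicate (m + 1) 1) :
    ∀ i, u i = [] := by
  induction m with
  | zero => exact fun i => i.elim0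
  | succ m ih =>
    rw [ofFn_succ, flatten_cons, mword, append_assoc, cons_append, segmentProds_unmarked_append,
      segmentProds.eq_2, headI_cons, tail_cons, mul_one, replicate_succ, cons.injEq] at h
    have h0 : u 0 = [] := eq_nil_of_isChain_of_prod_map_sgen_eq_one (hu 0) h.1
    simp only [h0, reverse_nil, map_nil, nil_append] at h
    exact Fin.cases h0 (ih (fun i => hu i.succ) h.2)

theorem map_fst_eq_finRange_of_markedWordProd_eq_coxElt {N : List (Fin n × Bool)}
    (hN : N.IsChain (fun p q => p.1 ≠ q.1)) (h : markedWordProd N = coxElt n) :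
    N.map Prod.fst = finRange n :=
  eq_of_isChain_of_prod_map_sgen_eq (isChain_map Prod.fst |>.2 hN)
    (nodup_finRange n).isChain
    (by simpa [map_map, Function.comp_def, markedWordProd, coxElt, ofFn_eq_map] using h)

theorem eq_id_and_eq_map_finRange_of_filter_snd_eq {N : List (Fin n × Bool)}
    {j : Fin n → Fin n} (hfst : N.map Prod.fst = finRange n)
    (hcont : N.filter (·.2) = ofFn fun i => (j i, true)) :
    j = id ∧ N = (finRange n).map (·, true) := by
  have hlen : N.length = n := by simpa using congrArg length hfst
  have hall : N.filter (·.2) = N := by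
    rw [filter_eq_self, ← length_filter_eq_length_iff, hcont, length_ofFn, hlen]
  have hj : j = id := by
    rwa [← hall, hcont, map_ofFn, ← ofFn_id, ofFn_inj] at hfst
  refine ⟨hj, ?_⟩
  rw [← hall, hcont, hj, ← ofFn_id, map_ofFn]
  rfl

end

/-- If the concatenation of the normal forms of reflections `t_1,…,t_n` with product
`c = s_1 ⋯ s_n` admits an execution of the cancellation procedure reaching a normal form
without ever cancelling a content letter, then all normal forms are single letters and
`(t_1,…,t_n) = (s_1,…,s_n)`. -/
theorem untouched_contents_case (n : ℕ) (u : Fin n → List (Fin n)) (j : Fin n → Fin n)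
    (hnf : ∀ i, List.Chain' (· ≠ ·) (u i ++ j i :: (u i).reverse))
    (hprod : (List.ofFn fun i => ((u i ++ j i :: (u i).reverse).map sgen).prod).prod
        = coxElt n)
    (hexec : ∃ N : List (Fin n × Bool),
      Relation.ReflTransGen (mstep n) ((List.ofFn fun i => mword (u i) (j i)).flatten) N ∧
      List.Chain' (fun p q => p.1 ≠ q.1) N) :
    (∀ i, u i = []) ∧
    (∀ i, ((u i ++ j i :: (u i).reverse).map sgen).prod = sgen i) := by
  obtain ⟨N, hsteps, hNred⟩ := hexec
  have hprodN : markedWordProd N = coxElt n := by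
    rw [← eq_of_reflTransGen_mstep _ markedWordProd_eq_of_mstep hsteps, ← hprod]
    simp only [markedWordProd_flatten, map_ofFn, Function.comp_def, markedWordProd_mword]
  have hcontN : N.filter (·.2) = ofFn fun i => (j i, true) := by
    rw [← eq_of_reflTransGen_mstep _ filter_snd_eq_of_mstep hsteps, filter_snd_flatten_ofFn_mword]
  obtain ⟨hj, hN⟩ := eq_id_and_eq_map_finRange_of_filter_snd_eq
    (map_fst_eq_finRange_of_markedWordProd_eq_coxElt hNred hprodN) hcontN
  have hu : ∀ i, u i = [] := by
    refine eq_nil_of_segmentProds_flatten_ofFn_mword (j := j)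
      (fun i => (hnf i).prefix (prefix_append _ _)) ?_
    rw [eq_of_reflTransGen_mstep _ segmentProds_eq_of_mstep hsteps, hN, segmentProds_map_marked,
      length_finRange]
  exact ⟨hu, fun i => by simp [hu i, hj]⟩
end

section
/- Let M be a monoid presented with generating set R_g = {f_1,…,f_n regarded as conjugates occurring in the Hurwitz orbit of (f_1,…,f_n)} and relations r r' = r'' r whenever some tuple in Red_R(g) starts with (r, r', …) and r'' = r r' r^{-1}. Then the group defined by this presentation is isomorphic to the free group F_n. (I.e., the Hurwitz 'dual' presentation presents F_n.) -/
/-- The set `R_g` of entries of tuples in the Hurwitz orbit `Red_R(g)` of `(f_1,…,f_n)`. -/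
def RgOrbit (n : ℕ) : Set (FreeGroup (Fin n)) :=
  { r | ∃ t : Fin n → FreeGroup (Fin n),
      Relation.EqvGen (hstep n (FreeGroup (Fin n))) (fun i => FreeGroup.of i) t ∧
      ∃ i, t i = r }

/-- The dual relations: `r r' = r'' r` whenever a tuple in the Hurwitz orbit starts
with `(r, r', …)` and `r'' = r r' r⁻¹`. -/
def dualRels (n : ℕ) : Set (FreeGroup (RgOrbit n)) :=
  { x | ∃ a b c : RgOrbit n,
      (∃ t : Fin n → FreeGroup (Fin n),
        Relation.EqvGen (hstep n (FreeGroup (Fin n))) (fun i => FreeGroup.of i) t ∧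
        ∃ h : 1 < n, t ⟨0, by omega⟩ = (a : FreeGroup (Fin n)) ∧
          t ⟨1, h⟩ = (b : FreeGroup (Fin n))) ∧
      (c : FreeGroup (Fin n)) = (a : FreeGroup (Fin n)) * b * (a : FreeGroup (Fin n))⁻¹ ∧
      x = FreeGroup.of a * FreeGroup.of b * (FreeGroup.of c * FreeGroup.of a)⁻¹ }

section HurwitzMove

variable {G : Type*} [Group G] {n : ℕ}

lemma hmove_apply_left (i : ℕ) (hi : i + 1 < n) (g : Fin n → G) :
    hmove n G i hi g ⟨i, by omega⟩ = g ⟨i, by omega⟩ * g ⟨i + 1, hi⟩ * (g ⟨i, by omega⟩)⁻¹ := by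
  simp [hmove]

lemma hmove_apply_right (i : ℕ) (hi : i + 1 < n) (g : Fin n → G) :
    hmove n G i hi g ⟨i + 1, hi⟩ = g ⟨i, by omega⟩ := by
  simp [hmove]

lemma hmove_apply_of_ne (i : ℕ) (hi : i + 1 < n) (g : Fin n → G) {j : Fin n}
    (h₁ : (j : ℕ) ≠ i) (h₂ : (j : ℕ) ≠ i + 1) : hmove n G i hi g j = g j := by
  simp [hmove, h₁, h₂]

def hmoveInv (n : ℕ) (G : Type*) [Group G] (i : ℕ) (hi : i + 1 < n)
    (g : Fin n → G) : Fin n → G := fun j =>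
  if (j : ℕ) = i then g ⟨i + 1, hi⟩
  else if (j : ℕ) = i + 1 then (g ⟨i + 1, hi⟩)⁻¹ * g ⟨i, by omega⟩ * g ⟨i + 1, hi⟩
  else g j

lemma hmoveInv_apply_left (i : ℕ) (hi : i + 1 < n) (g : Fin n → G) :
    hmoveInv n G i hi g ⟨i, by omega⟩ = g ⟨i + 1, hi⟩ := by
  simp [hmoveInv]

lemma hmoveInv_apply_of_ne (i : ℕ) (hi : i + 1 < n) (g : Fin n → G) {j : Fin n}
    (h₁ : (j : ℕ) ≠ i) (h₂ : (j : ℕ) ≠ i + 1) : hmoveInv n G i hi g j = g j := by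
  simp [hmoveInv, h₁, h₂]

lemma hmove_hmoveInv (i : ℕ) (hi : i + 1 < n) (g : Fin n → G) :
    hmove n G i hi (hmoveInv n G i hi g) = g := by
  funext j
  by_cases h₁ : (j : ℕ) = i
  · rw [show j = ⟨i, by omega⟩ from Fin.ext h₁]
    simp only [hmove, ↓reduceIte, hmoveInv, Nat.add_eq_left, one_ne_zero]
    group
  by_cases h₂ : (j : ℕ) = i + 1
  · rw [show j = ⟨i + 1, hi⟩ from Fin.ext h₂]
    simp [hmove, hmoveInv]
  simp [hmove, hmoveInv, h₁, h₂]

lemma eqvGen_hstep_hmoveInv (i : ℕ) (hi : i + 1 < n) (g : Fin n → G) :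
    Relation.EqvGen (hstep n G) g (hmoveInv n G i hi g) :=
  .symm _ _ (.rel _ _ ⟨i, hi, (hmove_hmoveInv i hi g).symm⟩)

/-- `σ_{i-1}⁻¹ σ_i⁻¹` moves the pair in positions `i, i+1` one step to the left, unchanged. -/
lemma exists_eqvGen_hstep_front (i : ℕ) (t : Fin n → G) (hi : i + 1 < n) :
    ∃ u, Relation.EqvGen (hstep n G) t u ∧ u ⟨0, by omega⟩ = t ⟨i, by omega⟩ ∧
      u ⟨1, by omega⟩ = t ⟨i + 1, hi⟩ := by
  induction i generalizing t with
  | zero => exact ⟨t, .refl _, rfl, rfl⟩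
  | succ i ih =>
    obtain ⟨u, htu, hu₀, hu₁⟩ :=
      ih (hmoveInv n G (i + 1) hi (hmoveInv n G i (by omega) t)) (by omega)
    refine ⟨u, ((eqvGen_hstep_hmoveInv _ _ t).trans _ _ _
      (eqvGen_hstep_hmoveInv _ _ _)).trans _ _ _ htu, ?_, ?_⟩
    · rw [hu₀, hmoveInv_apply_of_ne (i + 1) hi _ (j := ⟨i, by omega⟩) (by simp) (by simp; omega),
        hmoveInv_apply_left]
    · rw [hu₁, hmoveInv_apply_left (i + 1) hi,
        hmoveInv_apply_of_ne i _ t (j := ⟨i + 2, hi⟩) (by simp) (by simp)]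

end HurwitzMove

lemma Relation.EqvGen.iff_of_forall_rel {α : Type*} {r : α → α → Prop} {P : α → Prop}
    (hP : ∀ x y, r x y → (P x ↔ P y)) {x y : α} (h : Relation.EqvGen r x y) : P x ↔ P y := by
  induction h with
  | rel x y hxy => exact hP x y hxy
  | refl => rfl
  | symm _ _ _ ih => exact ih.symm
  | trans _ _ _ _ _ ih₁ ih₂ => exact ih₁.trans ih₂

lemma Fin.forall_iff_adjacent {n i : ℕ} (hi : i + 1 < n) (P : Fin n → Prop) :
    (∀ j, P j) ↔
      P ⟨i, by omega⟩ ∧ P ⟨i + 1, hi⟩ ∧ ∀ j : Fin n, (j : ℕ) ≠ i → (j : ℕ) ≠ i + 1 → P j := by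
  refine ⟨fun h => ⟨h _, h _, fun j _ _ => h j⟩, fun ⟨h₁, h₂, h₃⟩ j => ?_⟩
  by_cases hj₁ : (j : ℕ) = i
  · rwa [show j = ⟨i, by omega⟩ from Fin.ext hj₁]
  by_cases hj₂ : (j : ℕ) = i + 1
  · rwa [show j = ⟨i + 1, hi⟩ from Fin.ext hj₂]
  exact h₃ j hj₁ hj₂

section Agreement

variable {G K : Type*} [Group G] [Group K] {n : ℕ}

lemma agree_hmove_iff (φ : G →* K) (ψ : G → K) (i : ℕ) (hi : i + 1 < n) (x : Fin n → G)
    (hψ : ψ (x ⟨i, by omega⟩ * x ⟨i + 1, hi⟩ * (x ⟨i, by omega⟩)⁻¹) =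
      ψ (x ⟨i, by omega⟩) * ψ (x ⟨i + 1, hi⟩) * (ψ (x ⟨i, by omega⟩))⁻¹) :
    (∀ j, φ (x j) = ψ (x j)) ↔ ∀ j, φ (hmove n G i hi x j) = ψ (hmove n G i hi x j) := by
  rw [Fin.forall_iff_adjacent hi fun j => φ (x j) = ψ (x j),
    Fin.forall_iff_adjacent hi fun j => φ (hmove n G i hi x j) = ψ (hmove n G i hi x j),
    hmove_apply_left, hmove_apply_right, hψ, map_mul, map_mul, map_inv]
  have hrest : (∀ j : Fin n, (j : ℕ) ≠ i → (j : ℕ) ≠ i + 1 → φ (x j) = ψ (x j)) ↔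
      ∀ j : Fin n, (j : ℕ) ≠ i → (j : ℕ) ≠ i + 1 →
        φ (hmove n G i hi x j) = ψ (hmove n G i hi x j) :=
    forall_congr' fun j => imp_congr_right fun h₁ => imp_congr_right fun h₂ => by
      rw [hmove_apply_of_ne i hi x h₁ h₂]
  rw [← hrest]
  constructor
  · rintro ⟨hleft, hright, hothers⟩
    exact ⟨by rw [hleft, hright], hleft, hothers⟩
  · rintro ⟨hconj, hleft, hothers⟩
    rw [hleft] at hconj
    exact ⟨hleft, mul_left_cancel (mul_right_cancel hconj), hothers⟩

lemma agree_of_eqvGen_hstep (φ : G →* K) (ψ : G → K) {t₀ t : Fin n → G}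
    (hψ : ∀ x, Relation.EqvGen (hstep n G) t₀ x → ∀ (i : ℕ) (hi : i + 1 < n),
      ψ (x ⟨i, by omega⟩ * x ⟨i + 1, hi⟩ * (x ⟨i, by omega⟩)⁻¹) =
        ψ (x ⟨i, by omega⟩) * ψ (x ⟨i + 1, hi⟩) * (ψ (x ⟨i, by omega⟩))⁻¹)
    (h₀ : ∀ j, φ (t₀ j) = ψ (t₀ j)) (ht : Relation.EqvGen (hstep n G) t₀ t) :
    ∀ j, φ (t j) = ψ (t j) := by
  let P x := Relation.EqvGen (hstep n G) t₀ x ∧ ∀ j, φ (x j) = ψ (x j)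
  have hstep_iff : ∀ x y, hstep n G x y → (P x ↔ P y) := by
    rintro x _ ⟨i, hi, rfl⟩
    have hxy : Relation.EqvGen (hstep n G) x (hmove n G i hi x) := .rel _ _ ⟨i, hi, rfl⟩
    constructor
    · rintro ⟨hx, hagree⟩
      exact ⟨hx.trans _ _ _ hxy, (agree_hmove_iff φ ψ i hi x (hψ x hx i hi)).1 hagree⟩
    · rintro ⟨hy, hagree⟩
      have hx := hy.trans _ _ _ (hxy.symm _ _)
      exact ⟨hx, (agree_hmove_iff φ ψ i hi x (hψ x hx i hi)).2 hagree⟩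
  exact ((Relation.EqvGen.iff_of_forall_rel hstep_iff ht).1 ⟨.refl _, h₀⟩).2

end Agreement

namespace DualPresentation

variable {n : ℕ}

lemma mem_rgOrbit {t : Fin n → FreeGroup (Fin n)}
    (ht : Relation.EqvGen (hstep n _) (fun i => FreeGroup.of i) t) (i : Fin n) :
    t i ∈ RgOrbit n :=
  ⟨t, ht, i, rfl⟩

def toFree (n : ℕ) : PresentedGroup (dualRels n) →* FreeGroup (Fin n) :=
  PresentedGroup.toGroup (f := fun r : RgOrbit n => (r : FreeGroup (Fin n))) <| by
    rintro _ ⟨a, b, c, -, hc, rfl⟩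
    simp only [map_mul, map_inv, FreeGroup.lift_apply_of, hc]
    group

lemma toFree_of (r : RgOrbit n) : toFree n (PresentedGroup.of r) = r :=
  PresentedGroup.toGroup.of _

def ofFree (n : ℕ) : FreeGroup (Fin n) →* PresentedGroup (dualRels n) :=
  FreeGroup.lift fun i => PresentedGroup.of ⟨FreeGroup.of i, mem_rgOrbit (.refl _) i⟩

/-- The generator of the dual presentation named by `r`, with the junk value `1` for `r ∉ R_g`. -/
noncomputable def dualGen (r : FreeGroup (Fin n)) : PresentedGroup (dualRels n) :=
  open Classical in if h : r ∈ RgOrbit n then PresentedGroup.of ⟨r, h⟩ else 1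

lemma dualGen_of_mem {r : FreeGroup (Fin n)} (h : r ∈ RgOrbit n) :
    dualGen r = PresentedGroup.of ⟨r, h⟩ :=
  dif_pos h

lemma dualGen_conj {t : Fin n → FreeGroup (Fin n)}
    (ht : Relation.EqvGen (hstep n _) (fun i => FreeGroup.of i) t) (i : ℕ) (hi : i + 1 < n) :
    dualGen (t ⟨i, by omega⟩ * t ⟨i + 1, hi⟩ * (t ⟨i, by omega⟩)⁻¹) =
      dualGen (t ⟨i, by omega⟩) * dualGen (t ⟨i + 1, hi⟩) * (dualGen (t ⟨i, by omega⟩))⁻¹ := by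
  have hc := hmove_apply_left i hi t ▸
    mem_rgOrbit (ht.trans _ _ _ (.rel _ _ ⟨i, hi, rfl⟩)) ⟨i, by omega⟩
  obtain ⟨u, htu, hu₀, hu₁⟩ := exists_eqvGen_hstep_front i t hi
  have hrel : PresentedGroup.mk (dualRels n)
      (FreeGroup.of ⟨_, mem_rgOrbit ht _⟩ * FreeGroup.of ⟨_, mem_rgOrbit ht _⟩ *
        (FreeGroup.of ⟨_, hc⟩ * FreeGroup.of ⟨_, mem_rgOrbit ht ⟨i, by omega⟩⟩)⁻¹) = 1 :=
    PresentedGroup.one_of_mem ⟨_, _, _, ⟨u, ht.trans _ _ _ htu, by omega, hu₀, hu₁⟩, rfl, rfl⟩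
  rw [dualGen_of_mem hc, dualGen_of_mem (mem_rgOrbit ht _), dualGen_of_mem (mem_rgOrbit ht _)]
  rw [map_mul, map_inv, map_mul, mul_inv_eq_one] at hrel
  exact eq_mul_inv_of_mul_eq hrel.symm

lemma ofFree_eq_of {r : FreeGroup (Fin n)} (hr : r ∈ RgOrbit n) :
    ofFree n r = PresentedGroup.of ⟨r, hr⟩ := by
  rw [← dualGen_of_mem hr]
  obtain ⟨t, ht, i, rfl⟩ := hr
  refine agree_of_eqvGen_hstep (ofFree n) dualGen (fun x hx => dualGen_conj hx) (fun j => ?_) ht i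
  rw [dualGen_of_mem (mem_rgOrbit (.refl _) j)]
  exact FreeGroup.lift_apply_of

end DualPresentation

/-- The dual (Hurwitz) presentation presents the free group `F_n`. -/
theorem dual_presentation_is_free (n : ℕ) :
    ∃ e : PresentedGroup (dualRels n) ≃* FreeGroup (Fin n),
      ∀ r : RgOrbit n, e (PresentedGroup.of r) = (r : FreeGroup (Fin n)) := by
  refine ⟨MonoidHom.toMulEquiv (DualPresentation.toFree n) (DualPresentation.ofFree n) ?_ ?_,
    DualPresentation.toFree_of⟩
  · ext r
    simp only [MonoidHom.comp_apply, DualPresentation.toFree_of, MonoidHom.id_apply]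
    exact DualPresentation.ofFree_eq_of r.2
  · ext i
    exact DualPresentation.toFree_of _
end
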